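/- arXiv:2306.00432 — 4 statements merged into one kernel-verified Lean document; each statement's English description precedes it below -/
import Mathlib

section
/- Let 0 < α < 1/2 and let G be a finite simple graph on n vertices in which every vertex has positive degree and the maximum degree is at most n^α. Suppose each vertex v is included in a random set S independently with probability 1/√deg(v). Then the probability that the number of edges of G with both endpoints in S exceeds 2n is at most 2·exp(−n^{1−2α}). -/
open Finset MeasureTheory
open scoped Classical
set_option linter.unusedSectionVars false
set_option maxHeartbeats 1000000

namespace Stmt2Aux

variable {V : Type*} [Fintype V] [DecidableEq V]

section ExpOp

variable (p : V → ℝ)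

def w (v : V) (b : Bool) : ℝ := if b then p v else 1 - p v

def W (s : V → Bool) : ℝ := ∏ v, w p v (s v)

def Exp (f : (V → Bool) → ℝ) : ℝ := ∑ s : V → Bool, W p s * f s

def Av (v : V) (f : (V → Bool) → ℝ) : (V → Bool) → ℝ :=
  fun x => (1 - p v) * f (Function.update x v false) + p v * f (Function.update x v true)

def El : List V → ((V → Bool) → ℝ) → ((V → Bool) → ℝ)
  | [], f => f
  | v :: l, f => Av p v (El l f)

variable {p}

lemma w_nonneg (hp0 : ∀ v, 0 ≤ p v) (hp1 : ∀ v, p v ≤ 1) (v : V) (b : Bool) :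
    0 ≤ w p v b := by
  cases b <;> simp [w, hp0 v, hp1 v]

lemma w_sum (v : V) : w p v false + w p v true = 1 := by simp [w]

lemma W_nonneg (hp0 : ∀ v, 0 ≤ p v) (hp1 : ∀ v, p v ≤ 1) (s : V → Bool) :
    0 ≤ W p s :=
  Finset.prod_nonneg fun v _ => w_nonneg hp0 hp1 v (s v)

lemma sum_W : ∑ s : V → Bool, W p s = 1 := by
  have h := Finset.prod_univ_sum (fun _ : V => (univ : Finset Bool)) (fun v b => w p v b)
  rw [Fintype.piFinset_univ] at h
  have h2 : ∀ v : V, ∑ b : Bool, w p v b = 1 := by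
    intro v; rw [Fintype.sum_bool]; rw [add_comm]; exact w_sum v
  simp only [h2, Finset.prod_const_one] at h
  exact h.symm

lemma Exp_const (r : ℝ) : Exp p (fun _ => r) = r := by
  unfold Exp
  rw [← Finset.sum_mul, sum_W, one_mul]

lemma Exp_mono (hp0 : ∀ v, 0 ≤ p v) (hp1 : ∀ v, p v ≤ 1) {f g : (V → Bool) → ℝ}
    (h : ∀ s, f s ≤ g s) : Exp p f ≤ Exp p g :=
  Finset.sum_le_sum fun s _ => mul_le_mul_of_nonneg_left (h s) (W_nonneg hp0 hp1 s)

lemma Exp_smul (k : ℝ) (f : (V → Bool) → ℝ) :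
    Exp p (fun s => k * f s) = k * Exp p f := by
  unfold Exp; rw [Finset.mul_sum]; congr 1; ext s; ring

lemma sub_lemma (p : V → ℝ) (v : V) (R : (V → Bool) → ℝ)
    (hR : ∀ s b, R (Function.update s v b) = R s)
    (g : (V → Bool) → ℝ) (b : Bool) :
    ∑ s : V → Bool, w p v (s v) * (R s * g (Function.update s v b))
      = ∑ s : V → Bool, (if s v = b then R s * g s else 0) := by
  classical
  rw [← Finset.sum_filter_add_sum_filter_not univ (fun s => s v = b)]
  have h1 : ∑ s ∈ univ.filter (fun s : V → Bool => s v = b),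
      w p v (s v) * (R s * g (Function.update s v b))
      = ∑ s ∈ univ.filter (fun s : V → Bool => s v = b), w p v b * (R s * g s) := by
    apply Finset.sum_congr rfl
    intro s hs
    simp only [Finset.mem_filter] at hs
    rw [hs.2, show Function.update s v b = s from by rw [← hs.2]; exact Function.update_eq_self v s]
  have h2 : ∑ s ∈ univ.filter (fun s : V → Bool => ¬ s v = b),
      w p v (s v) * (R s * g (Function.update s v b))
      = ∑ s ∈ univ.filter (fun s : V → Bool => s v = b), w p v (!b) * (R s * g s) := by
    apply Finset.sum_nbij' (i := fun s => Function.update s v b)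
      (j := fun s => Function.update s v (!b))
    · intro s hs
      simp
    · intro s hs
      simp only [Finset.mem_filter, Function.update_self] at *
      simp [hs.2]
    · intro s hs
      simp only [Finset.mem_filter] at hs
      funext u
      rcases eq_or_ne u v with rfl | hu
      · simp only [Function.update_self]
        cases hb : s u <;> cases b <;> simp_all
      · simp [Function.update_of_ne hu]
    · intro s hs
      simp only [Finset.mem_filter] at hs
      funext u
      rcases eq_or_ne u v with rfl | hu
      · simp [Function.update_self, hs.2]
      · simp [Function.update_of_ne hu]
    · intro s hs
      simp only [Finset.mem_filter] at hs
      have hsv : s v = !b := by cases hb : s v <;> cases b <;> simp_all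
      rw [hsv, hR]
  rw [h1, h2, ← Finset.sum_add_distrib]
  rw [Finset.sum_filter]
  apply Finset.sum_congr rfl
  intro s _
  by_cases hs : s v = b
  · simp only [hs, if_pos]
    have : w p v b * (R s * g s) + (w p v !b) * (R s * g s)
        = (w p v b + w p v !b) * (R s * g s) := by ring
    rw [this]
    have hw : w p v b + w p v (!b) = 1 := by cases b <;> simp [w]
    rw [hw, one_mul]
  · simp [hs]

lemma Exp_Av (p : V → ℝ) (v : V) (f : (V → Bool) → ℝ) :
    Exp p (Av p v f) = Exp p f := by
  classical
  set R : (V → Bool) → ℝ := fun s => ∏ u ∈ univ.erase v, w p u (s u) with hRdef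
  have hR : ∀ s b, R (Function.update s v b) = R s := by
    intro s b
    apply Finset.prod_congr rfl
    intro u hu
    rw [Function.update_of_ne (Finset.ne_of_mem_erase hu)]
  have hW : ∀ s, W p s = w p v (s v) * R s := by
    intro s
    exact (Finset.mul_prod_erase univ _ (Finset.mem_univ v)).symm
  have expand : Exp p (Av p v f)
      = (1 - p v) * (∑ s : V → Bool, w p v (s v) * (R s * f (Function.update s v false)))
        + p v * (∑ s : V → Bool, w p v (s v) * (R s * f (Function.update s v true))) := by
    unfold Exp Av
    rw [Finset.mul_sum, Finset.mul_sum, ← Finset.sum_add_distrib]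
    apply Finset.sum_congr rfl
    intro s _
    rw [hW s]; ring
  rw [expand, sub_lemma p v R hR f false, sub_lemma p v R hR f true]
  unfold Exp
  rw [Finset.mul_sum, Finset.mul_sum, ← Finset.sum_add_distrib]
  apply Finset.sum_congr rfl
  intro s _
  rw [hW s]
  cases hs : s v <;> simp [hs, w] <;> ring

/-- `f` does not depend on coordinate `v`. -/
def Ind (f : (V → Bool) → ℝ) (v : V) : Prop :=
  ∀ x b, f (Function.update x v b) = f x

lemma ind_Av_self (p : V → ℝ) (v : V) (f : (V → Bool) → ℝ) : Ind (Av p v f) v := by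
  intro x b
  unfold Av
  rw [Function.update_idem, Function.update_idem]

lemma ind_Av (p : V → ℝ) {f : (V → Bool) → ℝ} {v : V} (h : Ind f v) (u : V) :
    Ind (Av p u f) v := by
  rcases eq_or_ne u v with rfl | huv
  · exact ind_Av_self p u f
  · intro x b
    unfold Av
    rw [Function.update_comm huv.symm, Function.update_comm huv.symm, h, h]

lemma ind_El (p : V → ℝ) (f : (V → Bool) → ℝ) {v : V} :
    ∀ l : List V, v ∈ l → Ind (El p l f) v := by
  intro l
  induction l with
  | nil => intro h; simp at h
  | cons u l ih =>
    intro hv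
    rcases List.mem_cons.mp hv with rfl | hv'
    · exact ind_Av_self p v _
    · exact ind_Av p (ih hv') u

lemma eq_of_ind {g : (V → Bool) → ℝ} (hg : ∀ v, Ind g v) (s x : V → Bool) :
    g s = g x := by
  classical
  have key : ∀ l : List V, g (fun v => if v ∈ l then x v else s v) = g s := by
    intro l
    induction l with
    | nil => simp
    | cons u l ih =>
      have : (fun v => if v ∈ u :: l then x v else s v)
          = Function.update (fun v => if v ∈ l then x v else s v) u (x u) := by
        funext v
        rcases eq_or_ne v u with rfl | hv
        · simp
        · simp [Function.update_of_ne hv, List.mem_cons, hv]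
      rw [this, hg u, ih]
  have h := key Finset.univ.toList
  have : (fun v => if v ∈ Finset.univ.toList then x v else s v) = x := by
    funext v
    simp [Finset.mem_toList]
  rw [this] at h
  exact h.symm

lemma Exp_El (p : V → ℝ) (f : (V → Bool) → ℝ) :
    ∀ l : List V, Exp p (El p l f) = Exp p f := by
  intro l
  induction l with
  | nil => rfl
  | cons u l ih => rw [show El p (u :: l) f = Av p u (El p l f) from rfl, Exp_Av, ih]

lemma Exp_eq_El (p : V → ℝ) (f : (V → Bool) → ℝ) (l : List V) (hl : ∀ v, v ∈ l)
    (x : V → Bool) : Exp p f = El p l f x := by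
  have h1 : Exp p f = Exp p (El p l f) := (Exp_El p f l).symm
  rw [h1]
  have h2 : ∀ s, El p l f s = El p l f x := fun s =>
    eq_of_ind (fun v => ind_El p f l (hl v)) s x
  calc Exp p (El p l f) = Exp p (fun _ => El p l f x) := by
        unfold Exp; exact Finset.sum_congr rfl fun s _ => by rw [h2 s]
    _ = El p l f x := Exp_const _

end ExpOp


section Fold

variable {p : V → ℝ}

/-- `f` is nondecreasing in coordinate `v` with increment at most `c`. -/
def Mn (f : (V → Bool) → ℝ) (v : V) (c : ℝ) : Prop :=
  ∀ x, f (Function.update x v false) ≤ f (Function.update x v true) ∧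
    f (Function.update x v true) ≤ f (Function.update x v false) + c

lemma mn_Av (hp0 : ∀ v, 0 ≤ p v) (hp1 : ∀ v, p v ≤ 1)
    {f : (V → Bool) → ℝ} {v : V} {c : ℝ} (h : Mn f v c) {u : V} (huv : u ≠ v) :
    Mn (Av p u f) v c := by
  intro x
  have h0 : (0:ℝ) ≤ 1 - p u := by linarith [hp1 u]
  have hcomm : ∀ b b' : Bool, Function.update (Function.update x v b) u b'
      = Function.update (Function.update x u b') v b := by
    intro b b'
    exact Function.update_comm (Ne.symm huv) b b' x
  obtain ⟨h1f, h1c⟩ := h (Function.update x u false)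
  obtain ⟨h2f, h2c⟩ := h (Function.update x u true)
  constructor
  · simp only [Av]
    rw [hcomm false false, hcomm false true, hcomm true false, hcomm true true]
    exact add_le_add (mul_le_mul_of_nonneg_left h1f h0)
      (mul_le_mul_of_nonneg_left h2f (hp0 u))
  · simp only [Av]
    rw [hcomm false false, hcomm false true, hcomm true false, hcomm true true]
    nlinarith [h1c, h2c, hp0 u]

lemma mn_El (hp0 : ∀ v, 0 ≤ p v) (hp1 : ∀ v, p v ≤ 1)
    {f : (V → Bool) → ℝ} {v : V} {c : ℝ} (h : Mn f v c) :
    ∀ l : List V, v ∉ l → Mn (El p l f) v c := by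
  intro l
  induction l with
  | nil => intro _; exact h
  | cons u l ih =>
    intro hv
    have hvl : v ∉ l := fun hx => hv (List.mem_cons_of_mem u hx)
    have huv : u ≠ v := fun hx => hv (hx ▸ List.mem_cons_self)
    exact mn_Av hp0 hp1 (ih hvl) huv

lemma Av_mono (hp0 : ∀ v, 0 ≤ p v) (hp1 : ∀ v, p v ≤ 1) (v : V)
    {f g : (V → Bool) → ℝ} (h : ∀ y, f y ≤ g y) (x : V → Bool) :
    Av p v f x ≤ Av p v g x := by
  unfold Av
  have h0 : (0:ℝ) ≤ 1 - p v := by linarith [hp1 v]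
  exact add_le_add (mul_le_mul_of_nonneg_left (h _) h0)
    (mul_le_mul_of_nonneg_left (h _) (hp0 v))

lemma Av_smul (v : V) (k : ℝ) (f : (V → Bool) → ℝ) (x : V → Bool) :
    Av p v (fun y => k * f y) x = k * Av p v f x := by
  unfold Av; ring

/-- The two–point Hoeffding/Bennett step. -/
lemma Av_exp_le (hp0 : ∀ v, 0 ≤ p v) (hp1 : ∀ v, p v ≤ 1) (v : V)
    {t c : ℝ} (ht : 0 ≤ t) (hc : 0 ≤ c) (htc : t * c ≤ 1)
    {G : (V → Bool) → ℝ} (hM : Mn G v c) (x : V → Bool) :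
    Av p v (fun s => Real.exp (t * G s)) x
      ≤ Real.exp (t * Av p v G x + 3/4 * p v * (t * c)^2) := by
  set a := G (Function.update x v false) with ha
  set b := G (Function.update x v true) with hb
  obtain ⟨hab, hba⟩ := hM x
  set δ := t * b - t * a with hδ
  have hδ0 : 0 ≤ δ := by
    have := mul_le_mul_of_nonneg_left hab ht
    simp only [hδ]; linarith
  have hδc : δ ≤ t * c := by
    have := mul_le_mul_of_nonneg_left hba ht
    simp only [hδ]; nlinarith
  have hδ1 : δ ≤ 1 := le_trans hδc htc
  have lhseq : Av p v (fun s => Real.exp (t * G s)) x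
      = Real.exp (t * a) * ((1 - p v) + p v * Real.exp δ) := by
    have e0 : Av p v (fun s => Real.exp (t * G s)) x
        = (1 - p v) * Real.exp (t * a) + p v * Real.exp (t * b) := rfl
    rw [e0, show t * b = t * a + δ from by rw [hδ]; ring, Real.exp_add]
    ring
  have rhseq : t * Av p v G x + 3/4 * p v * (t * c)^2
      = t * a + (p v * δ + 3/4 * p v * (t*c)^2) := by
    have e0 : Av p v G x = (1 - p v) * a + p v * b := rfl
    rw [e0, hδ]; ring
  clear_value a b δ
  -- exp δ ≤ 1 + δ + (3/4) δ^2
  have hexpδ : Real.exp δ ≤ 1 + δ + 3/4 * δ^2 := by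
    have habs : |δ| ≤ 1 := abs_le.mpr ⟨by linarith, hδ1⟩
    have h2 := Real.exp_bound habs (n := 2) (by norm_num)
    have hsum : ∑ m ∈ Finset.range 2, δ ^ m / m.factorial = 1 + δ := by
      simp [Finset.sum_range_succ]
    rw [hsum] at h2
    have habs2 : |δ| ^ 2 = δ ^ 2 := by
      rw [abs_of_nonneg hδ0]
    have : Real.exp δ - (1 + δ) ≤ |δ| ^ 2 * ((2:ℕ).succ / ((2:ℕ).factorial * 2)) :=
      le_trans (le_abs_self _) h2
    rw [habs2] at this
    norm_num at this
    linarith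
  have key : (1 - p v) + p v * Real.exp δ
      ≤ Real.exp (p v * δ + 3/4 * p v * (t*c)^2) := by
    have e1 : (1 - p v) + p v * Real.exp δ = 1 + p v * (Real.exp δ - 1) := by ring
    have e2 : p v * (Real.exp δ - 1) ≤ p v * (δ + 3/4 * δ^2) := by
      apply mul_le_mul_of_nonneg_left _ (hp0 v)
      linarith
    have e3 : 1 + p v * (δ + 3/4 * δ^2) ≤ Real.exp (p v * (δ + 3/4 * δ^2)) := by
      have := Real.add_one_le_exp (p v * (δ + 3/4 * δ^2))
      linarith
    have e4 : p v * (δ + 3/4 * δ^2) ≤ p v * δ + 3/4 * p v * (t*c)^2 := by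
      have hδsq : δ^2 ≤ (t*c)^2 := by nlinarith
      have e5 : p v * δ^2 ≤ p v * (t*c)^2 := mul_le_mul_of_nonneg_left hδsq (hp0 v)
      have e6 : p v * (δ + 3/4 * δ^2) = p v * δ + 3/4 * (p v * δ^2) := by ring
      have e7 : 3/4 * p v * (t*c)^2 = 3/4 * (p v * (t*c)^2) := by ring
      rw [e6, e7]
      linarith
    calc (1 - p v) + p v * Real.exp δ = 1 + p v * (Real.exp δ - 1) := e1
      _ ≤ 1 + p v * (δ + 3/4 * δ^2) := by linarith
      _ ≤ Real.exp (p v * (δ + 3/4 * δ^2)) := e3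
      _ ≤ Real.exp (p v * δ + 3/4 * p v * (t*c)^2) := Real.exp_le_exp.mpr e4
  rw [lhseq, rhseq, Real.exp_add]
  apply mul_le_mul_of_nonneg_left key (le_of_lt (Real.exp_pos _))

/-- Main fold bound. -/
lemma foldBound (hp0 : ∀ v, 0 ≤ p v) (hp1 : ∀ v, p v ≤ 1)
    (c : V → ℝ) (hc0 : ∀ v, 0 ≤ c v) {t : ℝ} (ht : 0 ≤ t)
    (htc : ∀ v, t * c v ≤ 1) (f : (V → Bool) → ℝ) (hM : ∀ v, Mn f v (c v)) :
    ∀ l : List V, l.Nodup → ∀ x,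
      El p l (fun s => Real.exp (t * f s)) x
        ≤ Real.exp (t * El p l f x + ∑ v ∈ l.toFinset, 3/4 * p v * (t * c v)^2) := by
  intro l
  induction l with
  | nil => intro _ x; simp [El]
  | cons v l ih =>
    intro hnd x
    have hndl : l.Nodup := (List.nodup_cons.mp hnd).2
    have hvl : v ∉ l := (List.nodup_cons.mp hnd).1
    set C := ∑ u ∈ l.toFinset, 3/4 * p u * (t * c u)^2 with hC
    have step1 : El p (v :: l) (fun s => Real.exp (t * f s)) x
        ≤ Av p v (fun y => Real.exp (t * El p l f y + C)) x := by
      exact Av_mono hp0 hp1 v (fun y => ih hndl y) x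
    have step2 : Av p v (fun y => Real.exp (t * El p l f y + C)) x
        = Real.exp C * Av p v (fun y => Real.exp (t * El p l f y)) x := by
      have : ∀ y, Real.exp (t * El p l f y + C) = Real.exp C * Real.exp (t * El p l f y) := by
        intro y; rw [Real.exp_add]; ring
      simp only [this]
      exact Av_smul v _ _ x
    have hMl : Mn (El p l f) v (c v) := mn_El hp0 hp1 (hM v) l hvl
    have step3 : Av p v (fun y => Real.exp (t * El p l f y)) x
        ≤ Real.exp (t * Av p v (El p l f) x + 3/4 * p v * (t * c v)^2) :=
      Av_exp_le hp0 hp1 v ht (hc0 v) (htc v) hMl x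
    have hsum : ∑ u ∈ (v :: l).toFinset, 3/4 * p u * (t * c u)^2
        = 3/4 * p v * (t * c v)^2 + C := by
      rw [List.toFinset_cons, Finset.sum_insert (by simpa using hvl)]
    calc El p (v :: l) (fun s => Real.exp (t * f s)) x
        ≤ Real.exp C * Av p v (fun y => Real.exp (t * El p l f y)) x := by
          rw [← step2]; exact step1
      _ ≤ Real.exp C * Real.exp (t * Av p v (El p l f) x + 3/4 * p v * (t * c v)^2) :=
          mul_le_mul_of_nonneg_left step3 (le_of_lt (Real.exp_pos _))
      _ = Real.exp (t * El p (v :: l) f x + ∑ u ∈ (v :: l).toFinset, 3/4 * p u * (t * c u)^2) := by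
          rw [hsum, ← Real.exp_add, show El p (v :: l) f = Av p v (El p l f) from rfl]
          ring_nf

/-- Master MGF bound. -/
lemma Exp_exp_le (hp0 : ∀ v, 0 ≤ p v) (hp1 : ∀ v, p v ≤ 1)
    (c : V → ℝ) (hc0 : ∀ v, 0 ≤ c v) {t : ℝ} (ht : 0 ≤ t)
    (htc : ∀ v, t * c v ≤ 1) (f : (V → Bool) → ℝ) (hM : ∀ v, Mn f v (c v)) :
    Exp p (fun s => Real.exp (t * f s))
      ≤ Real.exp (t * Exp p f + ∑ v, 3/4 * p v * (t * c v)^2) := by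
  classical
  set l := Finset.univ.toList (α := V) with hl
  have hlmem : ∀ v : V, v ∈ l := by intro v; simp [hl, Finset.mem_toList]
  have hlnd : l.Nodup := Finset.nodup_toList _
  set x : V → Bool := fun _ => false with hx
  have h1 : Exp p (fun s => Real.exp (t * f s))
      = El p l (fun s => Real.exp (t * f s)) x := Exp_eq_El p _ l hlmem x
  have h2 : Exp p f = El p l f x := Exp_eq_El p f l hlmem x
  have h3 := foldBound hp0 hp1 c hc0 ht htc f hM l hlnd x
  rw [h1, h2]
  have h4 : l.toFinset = Finset.univ := by
    ext v; simp [hl, Finset.mem_toList]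
  rw [← h4]
  exact h3

end Fold


section Graph

variable {p : V → ℝ}

lemma Exp_prod (p : V → ℝ) (φ : V → Bool → ℝ) :
    Exp p (fun s => ∏ v, φ v (s v))
      = ∏ v, (w p v false * φ v false + w p v true * φ v true) := by
  unfold Exp W
  have hpt : ∀ s : V → Bool, (∏ v, w p v (s v)) * ∏ v, φ v (s v)
      = ∏ v, (w p v (s v) * φ v (s v)) := by
    intro s; rw [← Finset.prod_mul_distrib]
  simp only [hpt]
  have h := Finset.prod_univ_sum (fun _ : V => (univ : Finset Bool))
    (fun v b => w p v b * φ v b)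
  rw [Fintype.piFinset_univ] at h
  rw [← h]
  apply Finset.prod_congr rfl
  intro v _
  rw [Fintype.sum_bool]
  ring

lemma Exp_pair (p : V → ℝ) (x y : V) (hxy : x ≠ y) :
    Exp p (fun s => if s x = true ∧ s y = true then 1 else 0) = p x * p y := by
  classical
  set φ : V → Bool → ℝ := fun v b => if v = x ∨ v = y then (if b then 1 else 0) else 1 with hφ
  have hpt : ∀ s : V → Bool, (if s x = true ∧ s y = true then (1:ℝ) else 0)
      = ∏ v, φ v (s v) := by
    intro s
    by_cases hx : s x = true
    · by_cases hy : s y = true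
      · rw [if_pos ⟨hx, hy⟩]
        symm
        apply Finset.prod_eq_one
        intro v _
        by_cases hv : v = x ∨ v = y
        · rcases hv with rfl | rfl <;> simp [φ, hx, hy]
        · simp [φ, hv]
      · rw [if_neg (by tauto)]
        symm
        apply Finset.prod_eq_zero (Finset.mem_univ y)
        have : s y = false := by simp_all
        simp [φ, this]
    · rw [if_neg (by tauto)]
      symm
      apply Finset.prod_eq_zero (Finset.mem_univ x)
      have : s x = false := by simp_all
      simp [φ, this]
  calc Exp p (fun s => if s x = true ∧ s y = true then 1 else 0)
      = Exp p (fun s => ∏ v, φ v (s v)) := by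
        unfold Exp; congr 1; funext s; exact congrArg (fun z => W p s * z) (hpt s)
    _ = ∏ v, (w p v false * φ v false + w p v true * φ v true) := Exp_prod p φ
    _ = ∏ v, (if v = x ∨ v = y then p v else 1) := by
        apply Finset.prod_congr rfl
        intro v _
        by_cases hv : v = x ∨ v = y <;> simp [φ, hv, w]
    _ = p x * p y := by
        have hmem : ∀ v : V, (v = x ∨ v = y) ↔ v ∈ ({x, y} : Finset V) := by
          intro v; simp
        calc ∏ v, (if v = x ∨ v = y then p v else 1)
            = ∏ v, (if v ∈ ({x, y} : Finset V) then p v else 1) := by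
              apply Finset.prod_congr rfl
              intro v _
              exact if_congr (hmem v) rfl rfl
          _ = ∏ v ∈ univ ∩ ({x, y} : Finset V), p v := Finset.prod_ite_mem _ _ _
          _ = ∏ v ∈ ({x, y} : Finset V), p v := by rw [Finset.univ_inter]
          _ = p x * p y := Finset.prod_pair hxy

variable (G : SimpleGraph V) [DecidableRel G.Adj]

lemma dart_sum (F : Sym2 V → ℝ) :
    ∑ d : G.Dart, F d.edge = ∑ e ∈ G.edgeFinset, 2 * F e := by
  classical
  rw [← Finset.sum_fiberwise_of_maps_to (g := fun d : G.Dart => d.edge)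
    (t := G.edgeFinset) (fun d _ => by simp [SimpleGraph.mem_edgeFinset, d.edge_mem])
    (fun d => F d.edge)]
  apply Finset.sum_congr rfl
  intro e he
  have hcard : (univ.filter fun d : G.Dart => d.edge = e).card = 2 :=
    G.dart_edge_fiber_card e (SimpleGraph.mem_edgeFinset.mp he)
  calc ∑ d ∈ univ.filter (fun d : G.Dart => d.edge = e), F d.edge
      = ∑ d ∈ univ.filter (fun d : G.Dart => d.edge = e), F e := by
        apply Finset.sum_congr rfl
        intro d hd
        rw [(Finset.mem_filter.mp hd).2]
    _ = 2 * F e := by rw [Finset.sum_const, hcard]; push_cast; ring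

lemma dart_fst_sum (F : V → ℝ) :
    ∑ d : G.Dart, F d.toProd.1 = ∑ v, (G.degree v : ℝ) * F v := by
  classical
  rw [← Finset.sum_fiberwise_of_maps_to (g := fun d : G.Dart => d.toProd.1)
    (t := (univ : Finset V)) (fun d _ => Finset.mem_univ _) (fun d => F d.toProd.1)]
  apply Finset.sum_congr rfl
  intro v _
  have hcard : (univ.filter fun d : G.Dart => d.toProd.1 = v).card = G.degree v :=
    G.dart_fst_fiber_card_eq_degree v
  calc ∑ d ∈ univ.filter (fun d : G.Dart => d.toProd.1 = v), F d.toProd.1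
      = ∑ d ∈ univ.filter (fun d : G.Dart => d.toProd.1 = v), F v := by
        apply Finset.sum_congr rfl
        intro d hd
        rw [(Finset.mem_filter.mp hd).2]
    _ = (G.degree v : ℝ) * F v := by rw [Finset.sum_const, hcard]; simp [nsmul_eq_mul]

lemma dart_snd_sum (F : V → ℝ) :
    ∑ d : G.Dart, F d.toProd.2 = ∑ d : G.Dart, F d.toProd.1 := by
  classical
  have hinv : Function.Involutive (fun d : G.Dart => d.symm) := fun d => d.symm_symm
  have := Equiv.sum_comp (hinv.toPerm _) (fun d : G.Dart => F d.toProd.1)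
  rw [← this]
  apply Finset.sum_congr rfl
  intro d _
  simp [Function.Involutive.coe_toPerm, SimpleGraph.Dart.symm_toProd]

end Graph


section XPart

variable (G : SimpleGraph V) [DecidableRel G.Adj]

def Q (p : V → ℝ) : Sym2 V → ℝ := Sym2.lift ⟨fun a b => p a * p b, fun a b => mul_comm _ _⟩

lemma X_filter_mono (s : V → Bool) (v : V) :
    (G.edgeFinset.filter (fun e => ∀ x ∈ e, Function.update s v false x = true))
      ⊆ (G.edgeFinset.filter (fun e => ∀ x ∈ e, Function.update s v true x = true)) := by
  intro e he
  rw [Finset.mem_filter] at *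
  refine ⟨he.1, ?_⟩
  intro x hx
  have hxv : x ≠ v := by
    intro h
    subst h
    have := he.2 x hx
    rw [Function.update_self] at this
    exact Bool.false_ne_true this
  rw [Function.update_of_ne hxv]
  have := he.2 x hx
  rwa [Function.update_of_ne hxv] at this

lemma X_filter_diff (s : V → Bool) (v : V) :
    (G.edgeFinset.filter (fun e => ∀ x ∈ e, Function.update s v true x = true))
      \ (G.edgeFinset.filter (fun e => ∀ x ∈ e, Function.update s v false x = true))
      ⊆ G.incidenceFinset v := by
  intro e he
  rw [Finset.mem_sdiff, Finset.mem_filter, Finset.mem_filter] at he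
  obtain ⟨⟨heE, hT⟩, hF⟩ := he
  rw [SimpleGraph.mem_incidenceFinset]
  refine ⟨SimpleGraph.mem_edgeFinset.mp heE, ?_⟩
  by_contra hv
  apply hF
  refine ⟨heE, ?_⟩
  intro x hx
  have hxv : x ≠ v := fun h => hv (h ▸ hx)
  rw [Function.update_of_ne hxv]
  have := hT x hx
  rwa [Function.update_of_ne hxv] at this

lemma X_Mn (v : V) :
    Mn (fun s => ((G.edgeFinset.filter (fun e => ∀ x ∈ e, s x = true)).card : ℝ))
      v ((G.degree v : ℝ)) := by
  intro x
  constructor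
  · show ((G.edgeFinset.filter
        (fun e => ∀ y ∈ e, Function.update x v false y = true)).card : ℝ)
      ≤ ((G.edgeFinset.filter
        (fun e => ∀ y ∈ e, Function.update x v true y = true)).card : ℝ)
    exact_mod_cast Finset.card_le_card (X_filter_mono G x v)
  · show ((G.edgeFinset.filter
        (fun e => ∀ y ∈ e, Function.update x v true y = true)).card : ℝ)
      ≤ ((G.edgeFinset.filter
        (fun e => ∀ y ∈ e, Function.update x v false y = true)).card : ℝ) + (G.degree v : ℝ)
    have h1 := Finset.card_sdiff_add_card_eq_card (X_filter_mono G x v)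
    have h2 := Finset.card_le_card (X_filter_diff G x v)
    rw [SimpleGraph.card_incidenceFinset_eq_degree] at h2
    have h3 : (G.edgeFinset.filter
        (fun e => ∀ y ∈ e, Function.update x v true y = true)).card
      ≤ (G.edgeFinset.filter
        (fun e => ∀ y ∈ e, Function.update x v false y = true)).card + G.degree v := by
      omega
    exact_mod_cast h3

lemma Exp_sum_finset {p : V → ℝ} {ι : Type*} (A : Finset ι) (g : ι → (V → Bool) → ℝ) :
    Exp p (fun s => ∑ e ∈ A, g e s) = ∑ e ∈ A, Exp p (g e) := by
  unfold Exp
  simp_rw [Finset.mul_sum]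
  rw [Finset.sum_comm]

lemma Exp_edge (p : V → ℝ) (e : Sym2 V) (he : e ∈ G.edgeFinset) :
    Exp p (fun s => if (∀ x ∈ e, s x = true) then (1:ℝ) else 0) = Q p e := by
  revert he
  refine Sym2.inductionOn e ?_
  intro x y he
  have hadj : G.Adj x y := (SimpleGraph.mem_edgeSet G).mp (SimpleGraph.mem_edgeFinset.mp he)
  have hxy : x ≠ y := hadj.ne
  have hiff : ∀ s : V → Bool, (∀ z ∈ (s(x, y) : Sym2 V), s z = true)
      ↔ (s x = true ∧ s y = true) := by
    intro s
    constructor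
    · intro h
      exact ⟨h x (Sym2.mem_mk_left x y), h y (Sym2.mem_mk_right x y)⟩
    · rintro ⟨h1, h2⟩ z hz
      rcases Sym2.mem_iff.mp hz with rfl | rfl
      · exact h1
      · exact h2
  have : Exp p (fun s => if (∀ z ∈ (s(x, y) : Sym2 V), s z = true) then (1:ℝ) else 0)
      = Exp p (fun s => if s x = true ∧ s y = true then (1:ℝ) else 0) := by
    unfold Exp
    congr 1; funext s
    exact congrArg (fun z => W p s * z) (if_congr (hiff s) rfl rfl)
  rw [this, Exp_pair p x y hxy]
  rfl

lemma Exp_X_eq (p : V → ℝ) :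
    Exp p (fun s => ((G.edgeFinset.filter (fun e => ∀ x ∈ e, s x = true)).card : ℝ))
      = ∑ e ∈ G.edgeFinset, Q p e := by
  have hcard : ∀ s : V → Bool,
      ((G.edgeFinset.filter (fun e => ∀ x ∈ e, s x = true)).card : ℝ)
        = ∑ e ∈ G.edgeFinset, (if (∀ x ∈ e, s x = true) then (1:ℝ) else 0) := by
    intro s
    rw [Finset.card_filter]
    push_cast
    rfl
  calc Exp p (fun s => ((G.edgeFinset.filter (fun e => ∀ x ∈ e, s x = true)).card : ℝ))
      = Exp p (fun s => ∑ e ∈ G.edgeFinset, (if (∀ x ∈ e, s x = true) then (1:ℝ) else 0)) := by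
        unfold Exp; congr 1; funext s
        exact congrArg (fun z => W p s * z) (hcard s)
    _ = ∑ e ∈ G.edgeFinset, Exp p (fun s => if (∀ x ∈ e, s x = true) then (1:ℝ) else 0) :=
        Exp_sum_finset _ _
    _ = ∑ e ∈ G.edgeFinset, Q p e :=
        Finset.sum_congr rfl fun e he => Exp_edge G p e he

lemma sum_Q_le (hdeg : ∀ v, 0 < G.degree v) :
    ∑ e ∈ G.edgeFinset, Q (fun v => 1 / Real.sqrt (G.degree v)) e
      ≤ (Fintype.card V : ℝ) / 2 := by
  set p : V → ℝ := fun v => 1 / Real.sqrt (G.degree v) with hpdef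
  have hdart : ∑ d : G.Dart, Q p d.edge = ∑ e ∈ G.edgeFinset, 2 * Q p e := dart_sum G _
  have hQd : ∀ d : G.Dart, Q p d.edge = p d.toProd.1 * p d.toProd.2 := by
    intro d
    rfl
  have hAM : ∀ d : G.Dart, p d.toProd.1 * p d.toProd.2
      ≤ (1 / (G.degree d.toProd.1 : ℝ) + 1 / (G.degree d.toProd.2 : ℝ)) / 2 := by
    intro d
    have hsq : ∀ u : V, (p u)^2 = 1 / (G.degree u : ℝ) := by
      intro u
      have h0 : (0:ℝ) ≤ (G.degree u : ℝ) := Nat.cast_nonneg _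
      rw [hpdef]
      simp only
      rw [div_pow, one_pow, Real.sq_sqrt h0]
    have h2 := two_mul_le_add_sq (p d.toProd.1) (p d.toProd.2)
    rw [hsq, hsq] at h2
    linarith
  have hineq : ∑ d : G.Dart, Q p d.edge
      ≤ ∑ d : G.Dart, (1 / (G.degree d.toProd.1 : ℝ) + 1 / (G.degree d.toProd.2 : ℝ)) / 2 := by
    apply Finset.sum_le_sum
    intro d _
    rw [hQd d]
    exact hAM d
  have hsplit : ∑ d : G.Dart, (1 / (G.degree d.toProd.1 : ℝ) + 1 / (G.degree d.toProd.2 : ℝ)) / 2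
      = ((∑ d : G.Dart, 1 / (G.degree d.toProd.1 : ℝ))
        + (∑ d : G.Dart, 1 / (G.degree d.toProd.2 : ℝ))) / 2 := by
    rw [← Finset.sum_add_distrib, ← Finset.sum_div]
  have hsnd := dart_snd_sum G (fun v => 1 / (G.degree v : ℝ))
  have hn : ∑ d : G.Dart, 1 / (G.degree d.toProd.1 : ℝ) = (Fintype.card V : ℝ) := by
    rw [dart_fst_sum G (fun v => 1 / (G.degree v : ℝ))]
    have hone : ∀ v : V, (G.degree v : ℝ) * (1 / (G.degree v : ℝ)) = 1 := by
      intro v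
      have : (G.degree v : ℝ) ≠ 0 := Nat.cast_ne_zero.mpr (hdeg v).ne'
      field_simp
    rw [Finset.sum_congr rfl fun v _ => hone v, Finset.sum_const, Finset.card_univ]
    simp
  have htot : ∑ e ∈ G.edgeFinset, 2 * Q p e ≤ (Fintype.card V : ℝ) := by
    rw [← hdart]
    calc ∑ d : G.Dart, Q p d.edge
        ≤ ((∑ d : G.Dart, 1 / (G.degree d.toProd.1 : ℝ))
          + (∑ d : G.Dart, 1 / (G.degree d.toProd.2 : ℝ))) / 2 := by
          rw [← hsplit]; exact hineq
      _ = (Fintype.card V : ℝ) := by rw [hsnd, hn]; ring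
  have : ∑ e ∈ G.edgeFinset, 2 * Q p e = 2 * ∑ e ∈ G.edgeFinset, Q p e := by
    rw [Finset.mul_sum]
  rw [this] at htot
  linarith

end XPart


section MeasurePart

lemma measure_finset_eq (μv : V → Measure Bool) [∀ v, IsProbabilityMeasure (μv v)]
    (p : V → ℝ) (hptrue : ∀ v, ((μv v) {true}).toReal = p v) (A : Finset (V → Bool)) :
    (Measure.pi μv (↑A : Set (V → Bool))).toReal = ∑ s ∈ A, W p s := by
  classical
  have hsing : ∀ s : V → Bool, Measure.pi μv {s} = ∏ v, μv v {s v} := by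
    intro s
    rw [show ({s} : Set (V → Bool)) = Set.pi Set.univ (fun v => {s v}) from
      (Set.univ_pi_singleton s).symm]
    exact Measure.pi_pi μv _
  have hA : (↑A : Set (V → Bool)) = ⋃ s ∈ A, {s} := by
    ext x; simp
  have hdisj : (↑A : Set (V → Bool)).PairwiseDisjoint (fun s => ({s} : Set (V → Bool))) := by
    intro a _ b _ hab
    simp [Set.disjoint_singleton, hab]
  have hmeas : ∀ s ∈ A, MeasurableSet ({s} : Set (V → Bool)) := fun s _ =>
    measurableSet_singleton s
  rw [hA, measure_biUnion_finset hdisj hmeas]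
  rw [ENNReal.toReal_sum (fun s _ => measure_ne_top _ _)]
  apply Finset.sum_congr rfl
  intro s _
  rw [hsing s, ENNReal.toReal_prod]
  unfold W
  apply Finset.prod_congr rfl
  intro v _
  cases hb : s v
  · have hc : ({false} : Set Bool) = ({true} : Set Bool)ᶜ := by
      ext b; cases b <;> simp
    rw [hc, prob_compl_eq_one_sub (measurableSet_singleton true)]
    rw [ENNReal.toReal_sub_of_le prob_le_one ENNReal.one_ne_top]
    rw [hptrue v]
    simp [w]
  · rw [hptrue v]
    simp [w]

end MeasurePart

end Stmt2Aux

/-- Let `0 < α < 1/2` and let `G` be a finite simple graph on `n`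
vertices in which every vertex has positive degree and the maximum degree is at most
`n^α`. If each vertex `v` is put into a random set `S` independently with probability
`1/√(deg v)`, then the probability that the number of edges of `G` with both endpoints
in `S` exceeds `2n` is at most `2 * exp (-n^(1-2α))`. -/
theorem stmt_2 {V : Type*} [Fintype V] [DecidableEq V] (G : SimpleGraph V)
    [DecidableRel G.Adj] (α : ℝ) (hα0 : 0 < α) (hα1 : α < 1/2)
    (hdeg : ∀ v, 0 < G.degree v)
    (hΔ : (G.maxDegree : ℝ) ≤ (Fintype.card V : ℝ) ^ α)
    (μv : V → Measure Bool) [∀ v, IsProbabilityMeasure (μv v)]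
    (hp : ∀ v, ((μv v) {true}).toReal = 1 / Real.sqrt (G.degree v)) :
    Measure.pi μv
        {s | 2 * Fintype.card V <
          (G.edgeFinset.filter (fun e => ∀ x ∈ e, s x = true)).card}
      ≤ ENNReal.ofReal
          (2 * Real.exp (-(Fintype.card V : ℝ) ^ (1 - 2 * α))) := by
  classical
  open Stmt2Aux in
  set n := Fintype.card V with hn
  by_cases hΔ3 : G.maxDegree ≤ 3
  · -- degenerate case: the event is empty
    have hempty : {s : V → Bool | 2 * n <
        (G.edgeFinset.filter (fun e => ∀ x ∈ e, s x = true)).card} = ∅ := by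
      ext s
      simp only [Set.mem_setOf_eq, Set.mem_empty_iff_false, iff_false, not_lt]
      have h1 : (G.edgeFinset.filter (fun e => ∀ x ∈ e, s x = true)).card
          ≤ G.edgeFinset.card := Finset.card_filter_le _ _
      have h2 : ∑ v, G.degree v = 2 * G.edgeFinset.card :=
        G.sum_degrees_eq_twice_card_edges
      have h3 : ∑ v, G.degree v ≤ n * 3 := by
        calc ∑ v, G.degree v ≤ (Finset.univ : Finset V).card • 3 :=
              Finset.sum_le_card_nsmul _ _ 3 (fun v _ =>
                le_trans (G.degree_le_maxDegree v) hΔ3)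
          _ = n * 3 := by rw [Finset.card_univ, smul_eq_mul]
      omega
    rw [hempty]
    simp only [measure_empty]
    exact zero_le
  · push_neg at hΔ3
    have hΔ4 : 4 ≤ G.maxDegree := hΔ3
    set Δ : ℝ := (G.maxDegree : ℝ) with hΔdef
    have hΔ4r : (4:ℝ) ≤ Δ := by rw [hΔdef]; exact_mod_cast hΔ4
    set S := Real.sqrt Δ with hS
    have hS2 : 2 ≤ S := by
      rw [hS, show (2:ℝ) = Real.sqrt 4 from by
        rw [show (4:ℝ) = 2^2 by norm_num, Real.sqrt_sq (by norm_num)]]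
      exact Real.sqrt_le_sqrt hΔ4r
    have hSsq : S^2 = Δ := Real.sq_sqrt (by linarith)
    have hS0 : (0:ℝ) < S := by linarith
    have hn1 : 1 ≤ (n:ℝ) := by
      by_contra h
      push_neg at h
      have hn0 : n = 0 := by
        have : n < 1 := by exact_mod_cast h
        omega
      rw [hn0, Nat.cast_zero, Real.zero_rpow (ne_of_gt hα0)] at hΔ
      linarith
    have hn0 : (0:ℝ) < n := by linarith
    set p : V → ℝ := fun v => 1 / Real.sqrt (G.degree v) with hpdef
    have hdegr : ∀ v, (1:ℝ) ≤ (G.degree v : ℝ) := fun v => by exact_mod_cast hdeg v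
    have hsq1 : ∀ v, 1 ≤ Real.sqrt (G.degree v) := fun v => by
      rw [show (1:ℝ) = Real.sqrt 1 from Real.sqrt_one.symm]
      exact Real.sqrt_le_sqrt (hdegr v)
    have hp0 : ∀ v, 0 ≤ p v := fun v => by
      rw [hpdef]; positivity
    have hp1 : ∀ v, p v ≤ 1 := fun v => by
      rw [hpdef]
      simp only
      rw [div_le_one (by linarith [hsq1 v])]
      exact hsq1 v
    set c : V → ℝ := fun v => (G.degree v : ℝ) with hcdef
    have hc0 : ∀ v, 0 ≤ c v := fun v => by rw [hcdef]; positivity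
    set t : ℝ := 1 / (2 * Δ * S) with ht
    have hΔ0 : (0:ℝ) < Δ := by linarith
    have ht0 : (0:ℝ) < t := by rw [ht]; positivity
    have hcS : ∀ v, c v ≤ Δ := fun v => by
      show ((G.degree v : ℕ) : ℝ) ≤ ((G.maxDegree : ℕ) : ℝ)
      exact_mod_cast G.degree_le_maxDegree v
    have htΔ : t * Δ = 1/(2*S) := by
      rw [ht]; field_simp
    have htc : ∀ v, t * c v ≤ 1 := by
      intro v
      have h1 : t * c v ≤ t * Δ := mul_le_mul_of_nonneg_left (hcS v) ht0.le
      rw [htΔ] at h1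
      have h2 : 1/(2*S) ≤ 1 := by
        rw [div_le_one (by linarith)]; linarith
      linarith
    set Xr : (V → Bool) → ℝ := fun s =>
      ((G.edgeFinset.filter (fun e => ∀ x ∈ e, s x = true)).card : ℝ) with hXr
    have hM : ∀ v, Mn Xr v (c v) := fun v => X_Mn G v
    have hmgf := Exp_exp_le hp0 hp1 c hc0 ht0.le htc Xr hM
    have hEX : Exp p Xr ≤ (n:ℝ)/2 := by
      calc Exp p Xr = ∑ e ∈ G.edgeFinset, Q p e := Exp_X_eq G p
        _ ≤ (n:ℝ)/2 := sum_Q_le G hdeg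
    have hphi : ∑ v, 3/4 * p v * (t * c v)^2 ≤ (n:ℝ) * (3 / (16 * Δ * S)) := by
      have hper : ∀ v : V, 3/4 * p v * (t * c v)^2 ≤ 3/(16 * Δ * S) := by
        intro v
        set sv := Real.sqrt (G.degree v) with hsv
        have hsv1 : 1 ≤ sv := hsq1 v
        have hsv0 : 0 < sv := by linarith
        have hsvS : sv ≤ S := by
          rw [hsv, hS]
          exact Real.sqrt_le_sqrt (hcS v)
        have hsvsq : sv^2 = c v := by
          rw [hsv, hcdef]
          exact Real.sq_sqrt (by positivity)
        have hpv : p v = 1/sv := rfl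
        have hΔS3 : Δ * S = S^3 := by rw [← hSsq]; ring
        have e : 3/4 * p v * (t * c v)^2 = 3 * sv^3/(16*S^6) := by
          rw [hpv, ← hsvsq, ht, ← hSsq]
          field_simp
          ring
        rw [e, show (16:ℝ) * Δ * S = 16 * S^3 from by rw [← hSsq]; ring]
        rw [div_le_div_iff₀ (by positivity) (by positivity)]
        have hcube : sv^3 ≤ S^3 := pow_le_pow_left₀ hsv0.le hsvS 3
        nlinarith [pow_pos hS0 3]
      calc ∑ v, 3/4 * p v * (t * c v)^2
          ≤ (Finset.univ : Finset V).card • (3/(16 * Δ * S)) :=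
            Finset.sum_le_card_nsmul _ _ _ (fun v _ => hper v)
        _ = (n:ℝ) * (3 / (16 * Δ * S)) := by
            rw [Finset.card_univ, nsmul_eq_mul, hn]
    have hExpexp : Exp p (fun s => Real.exp (t * Xr s))
        ≤ Real.exp (t*((n:ℝ)/2) + (n:ℝ)*(3/(16*Δ*S))) := by
      refine le_trans hmgf (Real.exp_le_exp.mpr ?_)
      exact add_le_add (mul_le_mul_of_nonneg_left hEX ht0.le) hphi
    -- the event as a Finset
    set Af : Finset (V → Bool) := Finset.univ.filter (fun s : V → Bool =>
      2 * n < (G.edgeFinset.filter (fun e => ∀ x ∈ e, s x = true)).card) with hAf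
    have hset : {s : V → Bool | 2 * n <
        (G.edgeFinset.filter (fun e => ∀ x ∈ e, s x = true)).card}
        = (↑Af : Set (V → Bool)) := by
      ext s
      simp [hAf]
    have hμ := measure_finset_eq μv p (fun v => hp v) Af
    -- Markov
    have hmarkov : ∑ s ∈ Af, W p s
        ≤ Real.exp (-(2*t*(n:ℝ))) * Exp p (fun s => Real.exp (t * Xr s)) := by
      have step1 : ∀ s ∈ Af, W p s
          ≤ W p s * (Real.exp (t * Xr s) * Real.exp (-(2*t*(n:ℝ)))) := by
        intro s hs
        have hX : 2 * n < (G.edgeFinset.filter (fun e => ∀ x ∈ e, s x = true)).card :=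
          (Finset.mem_filter.mp hs).2
        have hXge : 2*(n:ℝ) ≤ Xr s := by
          have h := le_of_lt hX
          show 2*(n:ℝ) ≤ ((G.edgeFinset.filter (fun e => ∀ x ∈ e, s x = true)).card : ℝ)
          exact_mod_cast h
        have hfac : 1 ≤ Real.exp (t * Xr s) * Real.exp (-(2*t*(n:ℝ))) := by
          rw [← Real.exp_add]
          apply Real.one_le_exp
          nlinarith
        exact le_mul_of_one_le_right (W_nonneg hp0 hp1 s) hfac
      calc ∑ s ∈ Af, W p s
          ≤ ∑ s ∈ Af, W p s * (Real.exp (t * Xr s) * Real.exp (-(2*t*(n:ℝ)))) :=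
            Finset.sum_le_sum step1
        _ ≤ ∑ s : V → Bool, W p s * (Real.exp (t * Xr s) * Real.exp (-(2*t*(n:ℝ)))) := by
            apply Finset.sum_le_sum_of_subset_of_nonneg (Finset.subset_univ _)
            intro s _ _
            have := W_nonneg hp0 hp1 s
            positivity
        _ = Real.exp (-(2*t*(n:ℝ))) * Exp p (fun s => Real.exp (t * Xr s)) := by
            unfold Stmt2Aux.Exp
            rw [Finset.mul_sum]
            apply Finset.sum_congr rfl
            intro s _
            ring
    -- exponent computation
    have hΔS3 : Δ * S = S^3 := by rw [← hSsq]; ring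
    have hexponent : -(2*t*(n:ℝ)) + (t*((n:ℝ)/2) + (n:ℝ)*(3/(16*Δ*S)))
        ≤ -((n:ℝ) ^ (1 - 2*α)) := by
      have hLHS : -(2*t*(n:ℝ)) + (t*((n:ℝ)/2) + (n:ℝ)*(3/(16*Δ*S)))
          = -((9/16) * ((n:ℝ)/(S^3))) := by
        rw [ht, ← hSsq]
        field_simp
        ring
      rw [hLHS]
      have hpos2α : (0:ℝ) < (n:ℝ)^(2*α) := Real.rpow_pos_of_pos hn0 _
      have hrp1 : (n:ℝ)^(1-2*α) * (n:ℝ)^(2*α) = (n:ℝ) := by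
        rw [← Real.rpow_add hn0, show (1-2*α)+(2*α) = 1 by ring, Real.rpow_one]
      have e1 : (n:ℝ)^(1-2*α) = (n:ℝ) / (n:ℝ)^(2*α) := by
        rw [eq_div_iff hpos2α.ne']
        exact hrp1
      have hrp2 : Δ^2 ≤ (n:ℝ)^(2*α) := by
        have h2 : (n:ℝ)^(2*α) = ((n:ℝ)^α)^2 := by
          rw [← Real.rpow_natCast ((n:ℝ)^α) 2, ← Real.rpow_mul (le_of_lt hn0)]
          norm_num
          rw [mul_comm]
        rw [h2]
        exact pow_le_pow_left₀ (by linarith) hΔ 2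
      have e2 : (n:ℝ) / (n:ℝ)^(2*α) ≤ (n:ℝ)/Δ^2 :=
        div_le_div_of_nonneg_left hn0.le (by positivity) hrp2
      have e3 : (n:ℝ)/Δ^2 ≤ (9/16) * ((n:ℝ)/(S^3)) := by
        rw [← hSsq, show ((S^2)^2 : ℝ) = S^4 from by ring,
          show (9:ℝ)/16 * ((n:ℝ)/(S^3)) = (9*(n:ℝ))/(16*S^3) from by ring]
        rw [div_le_div_iff₀ (by positivity) (by positivity)]
        nlinarith [mul_nonneg (mul_nonneg (pow_pos hS0 3).le
          (by linarith : (0:ℝ) ≤ 9*S-16)) hn0.le]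
      have : (n:ℝ)^(1-2*α) ≤ (9/16) * ((n:ℝ)/(S^3)) := by
        rw [e1]; linarith
      linarith
    -- put everything together
    have hreal : (Measure.pi μv (↑Af : Set (V → Bool))).toReal
        ≤ 2 * Real.exp (-(n:ℝ) ^ (1 - 2*α)) := by
      rw [hμ]
      have h2 : Real.exp (-(2*t*(n:ℝ))) * Exp p (fun s => Real.exp (t * Xr s))
          ≤ Real.exp (-(2*t*(n:ℝ)) + (t*((n:ℝ)/2) + (n:ℝ)*(3/(16*Δ*S)))) := by
        rw [Real.exp_add]
        exact mul_le_mul_of_nonneg_left hExpexp (Real.exp_pos _).le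
      have h3 : Real.exp (-(2*t*(n:ℝ)) + (t*((n:ℝ)/2) + (n:ℝ)*(3/(16*Δ*S))))
          ≤ Real.exp (-((n:ℝ) ^ (1 - 2*α))) := Real.exp_le_exp.mpr hexponent
      have h4 : Real.exp (-((n:ℝ) ^ (1 - 2*α))) ≤ 2 * Real.exp (-((n:ℝ) ^ (1 - 2*α))) := by
        nlinarith [Real.exp_pos (-((n:ℝ) ^ (1 - 2*α)))]
      calc ∑ s ∈ Af, W p s
          ≤ Real.exp (-(2*t*(n:ℝ))) * Exp p (fun s => Real.exp (t * Xr s)) := hmarkov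
        _ ≤ Real.exp (-((n:ℝ) ^ (1 - 2*α))) := le_trans h2 h3
        _ ≤ 2 * Real.exp (-((n:ℝ) ^ (1 - 2*α))) := h4
    rw [hset]
    rw [← ENNReal.ofReal_toReal (measure_ne_top (Measure.pi μv) (↑Af : Set (V → Bool)))]
    exact ENNReal.ofReal_le_ofReal hreal
end

section
/- Let γ > 0, let G be a finite simple graph in which every vertex has positive degree, and let u be a vertex with deg(u) = d ≥ 2 satisfying ∑_{v ∈ N(u)} 1/√deg(v) ≥ γ·ln d (i.e., u is a good node). Suppose each vertex v is included in a random set S independently with probability 1/√deg(v). Then the probability that no neighbor of u belongs to S is at most d^{−γ/2}. -/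
open Finset MeasureTheory

/-- Let `γ > 0`, let `G` be a finite simple graph in which every
vertex has positive degree, and let `u` be a vertex with `deg u = d ≥ 2` satisfying
`∑_{v ∈ N(u)} 1/√(deg v) ≥ γ * ln d` (a *good* node). If each vertex `v` is put into
a random set `S` independently with probability `1/√(deg v)`, then the probability
that no neighbor of `u` is in `S` is at most `d^(-γ/2)`. -/
theorem stmt_4 {V : Type*} [Fintype V] [DecidableEq V] (G : SimpleGraph V)
    [DecidableRel G.Adj] (γ : ℝ) (hγ : 0 < γ) (hdeg : ∀ v, 0 < G.degree v)
    (u : V) (d : ℕ) (hd : G.degree u = d) (hd2 : 2 ≤ d)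
    (hgood : γ * Real.log d ≤ ∑ v ∈ G.neighborFinset u, 1 / Real.sqrt (G.degree v))
    (μv : V → Measure Bool) [∀ v, IsProbabilityMeasure (μv v)]
    (hp : ∀ v, ((μv v) {true}).toReal = 1 / Real.sqrt (G.degree v)) :
    Measure.pi μv {s | ∀ v ∈ G.neighborFinset u, s v = false}
      ≤ ENNReal.ofReal ((d : ℝ) ^ (-(γ / 2))) := by
  set F := G.neighborFinset u with hF
  set p : V → ℝ := fun v => 1 / Real.sqrt (G.degree v) with hpdef
  have hp0 : ∀ v, 0 ≤ p v := fun v => by positivity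
  have hp1 : ∀ v, p v ≤ 1 := by
    intro v
    have h1 : (1 : ℝ) ≤ Real.sqrt (G.degree v) := by
      rw [show (1 : ℝ) = Real.sqrt 1 by simp]
      apply Real.sqrt_le_sqrt
      exact_mod_cast hdeg v
    rw [hpdef]
    simp only [one_div]
    exact inv_le_one_of_one_le₀ h1
  -- measure of {false}
  have hfalse : ∀ v, μv v {false} = ENNReal.ofReal (1 - p v) := by
    intro v
    have hc : ({false} : Set Bool) = {true}ᶜ := by
      ext b; cases b <;> simp
    have htne : μv v {true} ≠ ⊤ := measure_ne_top _ _
    rw [hc, measure_compl (by measurability) htne]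
    have : μv v {true} = ENNReal.ofReal (p v) := by
      simp only [hpdef]
      rw [← hp v, ENNReal.ofReal_toReal htne]
    rw [this, measure_univ, ← ENNReal.ofReal_one,
      ← ENNReal.ofReal_sub _ (hp0 v)]
  -- rewrite the set as a product set
  have hset : {s : V → Bool | ∀ v ∈ F, s v = false}
      = Set.univ.pi (fun v => if v ∈ F then ({false} : Set Bool) else Set.univ) := by
    ext s
    simp only [Set.mem_setOf_eq, Set.mem_pi, Set.mem_univ, forall_true_left]
    constructor
    · intro h v
      by_cases hv : v ∈ F <;> simp [hv, h]
    · intro h v hv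
      have := h v
      simpa [hv] using this
  rw [hset, Measure.pi_pi]
  have hprod : ∏ v, μv v (if v ∈ F then ({false} : Set Bool) else Set.univ)
      = ∏ v ∈ F, ENNReal.ofReal (1 - p v) := by
    rw [← Finset.prod_filter_mul_prod_filter_not Finset.univ (fun v => v ∈ F)]
    have h1 : ∀ v ∈ Finset.univ.filter (fun v => v ∈ F),
        μv v (if v ∈ F then ({false} : Set Bool) else Set.univ)
          = ENNReal.ofReal (1 - p v) := by
      intro v hv
      simp only [Finset.mem_filter] at hv
      rw [if_pos hv.2, hfalse]
    have h2 : ∀ v ∈ Finset.univ.filter (fun v => ¬ v ∈ F),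
        μv v (if v ∈ F then ({false} : Set Bool) else Set.univ) = 1 := by
      intro v hv
      simp only [Finset.mem_filter] at hv
      rw [if_neg hv.2]
      exact measure_univ
    rw [Finset.prod_congr rfl h1, Finset.prod_congr rfl h2, Finset.prod_const_one,
      mul_one]
    congr 1
    ext v
    simp
  rw [hprod, ← ENNReal.ofReal_prod_of_nonneg (fun v _ => by linarith [hp1 v])]
  apply ENNReal.ofReal_le_ofReal
  -- real inequality
  have hd1 : (1 : ℝ) ≤ (d : ℝ) := by exact_mod_cast le_trans (by norm_num) hd2
  have hdpos : (0 : ℝ) < d := by linarith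
  have step1 : ∏ v ∈ F, (1 - p v) ≤ Real.exp (-(∑ v ∈ F, p v)) := by
    rw [← Finset.sum_neg_distrib, Real.exp_sum]
    apply Finset.prod_le_prod (fun v _ => by linarith [hp1 v])
    intro v _
    have := Real.add_one_le_exp (-(p v))
    linarith
  have step2 : Real.exp (-(∑ v ∈ F, p v)) ≤ Real.exp (-(γ * Real.log d)) := by
    apply Real.exp_le_exp.mpr
    simp only [neg_le_neg_iff]
    exact hgood
  have step3 : Real.exp (-(γ * Real.log d)) = (d : ℝ) ^ (-γ) := by
    rw [Real.rpow_def_of_pos hdpos]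
    ring_nf
  have step4 : (d : ℝ) ^ (-γ) ≤ (d : ℝ) ^ (-(γ / 2)) := by
    apply Real.rpow_le_rpow_of_exponent_le hd1
    linarith
  calc ∏ v ∈ F, (1 - p v) ≤ Real.exp (-(∑ v ∈ F, p v)) := step1
    _ ≤ Real.exp (-(γ * Real.log d)) := step2
    _ = (d : ℝ) ^ (-γ) := step3
    _ ≤ (d : ℝ) ^ (-(γ / 2)) := step4
end

section
/- Let γ > 0, let G be a finite simple graph in which every vertex has positive degree, and let u be a vertex with deg(u) = d ≥ 3 satisfying ∑_{v ∈ N(u)} 1/√deg(v) < γ·ln d (i.e., u is a bad node). Then the number of neighbors v of u with deg(v) ≥ d²/(4γ²·(ln d)²) is at least d/2. -/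
open Finset
open scoped Classical

/-- Let `γ > 0`, let `G` be a finite simple graph in which every
vertex has positive degree, and let `u` be a vertex with `deg u = d ≥ 3` satisfying
`∑_{v ∈ N(u)} 1/√(deg v) < γ * ln d` (a *bad* node). Then the number of neighbors `v`
of `u` with `deg v ≥ d²/(4γ²(ln d)²)` is at least `d/2`. -/
theorem stmt_5 {V : Type*} [Fintype V] [DecidableEq V] (G : SimpleGraph V)
    [DecidableRel G.Adj] (γ : ℝ) (hγ : 0 < γ) (hdeg : ∀ v, 0 < G.degree v)
    (u : V) (d : ℕ) (hd : G.degree u = d) (hd3 : 3 ≤ d)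
    (hbad : ∑ v ∈ G.neighborFinset u, 1 / Real.sqrt (G.degree v) < γ * Real.log d) :
    (d : ℝ) / 2 ≤
      (((G.neighborFinset u).filter
        (fun v => (d : ℝ) ^ 2 / (4 * γ ^ 2 * (Real.log d) ^ 2) ≤ (G.degree v : ℝ))).card : ℝ) := by
  set L := Real.log d with hLdef
  have hdpos : (0:ℝ) < d := by
    have : (3:ℝ) ≤ d := by exact_mod_cast hd3
    linarith
  have hL : 0 < L := Real.log_pos (by exact_mod_cast lt_of_lt_of_le (by norm_num) hd3)
  set c : ℝ := (d : ℝ) / (2 * γ * L) with hcdef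
  have hc : 0 < c := by positivity
  have hT : (d : ℝ) ^ 2 / (4 * γ ^ 2 * L ^ 2) = c ^ 2 := by
    rw [hcdef]; ring
  set N := G.neighborFinset u with hN
  set P : V → Prop := fun v => (d : ℝ) ^ 2 / (4 * γ ^ 2 * L ^ 2) ≤ (G.degree v : ℝ) with hP
  set A := N.filter P with hA
  set B := N.filter (fun v => ¬ P v) with hB
  have hcard : A.card + B.card = N.card := card_filter_add_card_filter_not _
  have hNcard : N.card = d := by rw [hN, G.card_neighborFinset_eq_degree, hd]
  -- bound each term on B
  have hterm : ∀ v ∈ B, 1 / c ≤ 1 / Real.sqrt (G.degree v) := by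
    intro v hv
    have hvP : ¬ P v := (mem_filter.mp hv).2
    have hlt : (G.degree v : ℝ) < c ^ 2 := by
      rw [hP] at hvP; simp only [hT] at hvP; exact not_le.mp hvP
    have hdv : (0:ℝ) < G.degree v := by exact_mod_cast hdeg v
    have hs : Real.sqrt (G.degree v) < c := by
      have := Real.sqrt_lt_sqrt (le_of_lt hdv) hlt
      rwa [Real.sqrt_sq hc.le] at this
    have hspos : 0 < Real.sqrt (G.degree v) := Real.sqrt_pos.mpr hdv
    exact one_div_le_one_div_of_le hspos hs.le
  have hsumB : (B.card : ℝ) * (1 / c) ≤ ∑ v ∈ B, 1 / Real.sqrt (G.degree v) := by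
    calc (B.card : ℝ) * (1 / c) = ∑ _v ∈ B, 1 / c := by rw [sum_const, nsmul_eq_mul]
    _ ≤ _ := sum_le_sum hterm
  have hmono : ∑ v ∈ B, 1 / Real.sqrt (G.degree v)
      ≤ ∑ v ∈ N, 1 / Real.sqrt (G.degree v) := by
    apply sum_le_sum_of_subset_of_nonneg (filter_subset _ _)
    intro v _ _; positivity
  have hBlt : (B.card : ℝ) * (1 / c) < γ * L := lt_of_le_of_lt (hsumB.trans hmono) hbad
  have h1c : 1 / c = 2 * γ * L / d := by
    rw [hcdef, one_div_div]
  have hBhalf : (B.card : ℝ) < d / 2 := by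
    rw [h1c] at hBlt
    have h2 : (B.card : ℝ) * (2 * γ * L) < γ * L * d := by
      have h3 := mul_lt_mul_of_pos_right hBlt hdpos
      rw [mul_assoc, div_mul_cancel₀ _ (ne_of_gt hdpos)] at h3
      linarith
    nlinarith [mul_pos hγ hL]
  have hAcard : (A.card : ℝ) = d - B.card := by
    have : (A.card : ℝ) + B.card = d := by exact_mod_cast hcard.trans hNcard
    linarith
  rw [hA, hP] at *
  linarith [hAcard]
end

section
/- Let γ, c > 0, let d ≥ 3 be an integer, and let G be a finite simple graph in which every vertex has positive degree. Define B_d = { u ∈ V : d ≤ deg(u) < 2d and ∑_{v ∈ N(u)} 1/√deg(v) < γ·ln(deg(u)) }, and define B̄_d = { u ∈ B_d : every neighbor of u has fewer than c·√d·(ln d)⁵ neighbors in B_d }. Let d' = d²/(4γ²·(ln 2d)²) and let V_{≥d'} = { v ∈ V : deg(v) ≥ d' }. Then |B̄_d| ≤ 2c·|V_{≥d'}|·(ln d)⁵/√d. -/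
open Finset

/-- Let `γ, c > 0`, let `d ≥ 3` be an integer, and let `G` be a
finite simple graph in which every vertex has positive degree. Let
`B_d = {u : d ≤ deg u < 2d and ∑_{v ∈ N(u)} 1/√(deg v) < γ ln (deg u)}` (the bad
nodes of degree in `[d, 2d)`), let
`B̄_d = {u ∈ B_d : every neighbor of u has fewer than c √d (ln d)⁵ neighbors in B_d}`,
let `d' = d²/(4γ²(ln 2d)²)` and `V_{≥d'} = {v : deg v ≥ d'}`. Then
`|B̄_d| ≤ 2c |V_{≥d'}| (ln d)⁵ / √d`. -/
theorem stmt_6 {V : Type*} [Fintype V] [DecidableEq V] (G : SimpleGraph V)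
    [DecidableRel G.Adj] (γ c : ℝ) (hγ : 0 < γ) (hc : 0 < c)
    (d : ℕ) (hd : 3 ≤ d) (hdeg : ∀ v, 0 < G.degree v)
    (Bd : Finset V)
    (hBd : ∀ u, u ∈ Bd ↔
      d ≤ G.degree u ∧ G.degree u < 2 * d ∧
        ∑ v ∈ G.neighborFinset u, 1 / Real.sqrt (G.degree v)
          < γ * Real.log (G.degree u))
    (Bbar : Finset V)
    (hBbar : ∀ u, u ∈ Bbar ↔
      u ∈ Bd ∧ ∀ v ∈ G.neighborFinset u,
        ((G.neighborFinset v ∩ Bd).card : ℝ) < c * Real.sqrt d * (Real.log d) ^ 5)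
    (Vhi : Finset V)
    (hVhi : ∀ v, v ∈ Vhi ↔
      (d : ℝ) ^ 2 / (4 * γ ^ 2 * (Real.log (2 * (d : ℝ))) ^ 2) ≤ (G.degree v : ℝ)) :
    (Bbar.card : ℝ) ≤ 2 * c * Vhi.card * (Real.log d) ^ 5 / Real.sqrt d := by
  have hd3 : (3:ℝ) ≤ (d:ℝ) := by exact_mod_cast hd
  have hdpos : (0:ℝ) < (d:ℝ) := by linarith
  have hsd : 0 < Real.sqrt d := Real.sqrt_pos.mpr hdpos
  have hlogd : 0 < Real.log (d:ℝ) := Real.log_pos (by linarith)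
  have hlog2d : 0 < Real.log (2*(d:ℝ)) := Real.log_pos (by linarith)
  set s : ℝ := (d:ℝ) / (2*γ*Real.log (2*(d:ℝ))) with hs
  have hspos : 0 < s := by positivity
  have hssq : s^2 = (d:ℝ)^2 / (4*γ^2*(Real.log (2*(d:ℝ)))^2) := by
    rw [hs]; field_simp; ring
  -- Key step: every vertex of B̄_d has at least d/2 neighbors in V_{≥d'}.
  have key : ∀ u ∈ Bbar, (d:ℝ)/2 ≤ ((G.neighborFinset u ∩ Vhi).card : ℝ) := by
    intro u hu
    obtain ⟨hBdu, -⟩ := (hBbar u).1 hu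
    obtain ⟨hdu1, hdu2, hsum⟩ := (hBd u).1 hBdu
    set L := G.neighborFinset u \ Vhi with hL
    have hLsub : L ⊆ G.neighborFinset u := Finset.sdiff_subset
    have hterm : ∀ v ∈ L, 1/s ≤ 1 / Real.sqrt (G.degree v) := by
      intro v hv
      have hvV : v ∉ Vhi := (Finset.mem_sdiff.1 hv).2
      have hdegv : (G.degree v : ℝ) < s^2 := by
        rw [hssq]
        by_contra h
        exact hvV ((hVhi v).2 (le_of_not_gt h))
      have hdegpos : (0:ℝ) < (G.degree v : ℝ) := by exact_mod_cast hdeg v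
      have h1 : Real.sqrt (G.degree v) < s := by
        have h := Real.sqrt_lt_sqrt (le_of_lt hdegpos) hdegv
        rwa [Real.sqrt_sq hspos.le] at h
      have h2 : 0 < Real.sqrt (G.degree v) := Real.sqrt_pos.mpr hdegpos
      rw [div_le_div_iff₀ hspos h2]
      nlinarith
    have hLsum : (L.card : ℝ) * (1/s)
        ≤ ∑ v ∈ G.neighborFinset u, 1 / Real.sqrt (G.degree v) := by
      calc (L.card : ℝ) * (1/s) = ∑ _v ∈ L, 1/s := by
            rw [Finset.sum_const, nsmul_eq_mul]
        _ ≤ ∑ v ∈ L, 1 / Real.sqrt (G.degree v) := Finset.sum_le_sum hterm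
        _ ≤ ∑ v ∈ G.neighborFinset u, 1 / Real.sqrt (G.degree v) :=
            Finset.sum_le_sum_of_subset_of_nonneg hLsub (by intros; positivity)
    have hlogle : Real.log (G.degree u) ≤ Real.log (2*(d:ℝ)) := by
      apply Real.log_le_log (by exact_mod_cast hdeg u)
      exact_mod_cast hdu2.le
    have hLcard : (L.card : ℝ) < (d:ℝ)/2 := by
      have h3 : (L.card : ℝ) * (1/s) < γ * Real.log (2*(d:ℝ)) :=
        lt_of_le_of_lt hLsum (lt_of_lt_of_le hsum (by nlinarith))
      have hsinv : 1/s = 2*γ*Real.log (2*(d:ℝ)) / (d:ℝ) := by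
        rw [hs]; field_simp
      rw [hsinv] at h3
      have hγL : 0 < γ * Real.log (2*(d:ℝ)) := by positivity
      have hdne : (d:ℝ) ≠ 0 := ne_of_gt hdpos
      have h4 : (L.card:ℝ) * (2*γ*Real.log (2*(d:ℝ))) < γ * Real.log (2*(d:ℝ)) * d := by
        have h5 := mul_lt_mul_of_pos_right h3 hdpos
        rwa [mul_assoc, div_mul_cancel₀ _ (ne_of_gt hdpos)] at h5
      nlinarith [h4, hγL]
    have hcards : (G.neighborFinset u ∩ Vhi).card + L.card = G.degree u := by
      rw [hL, Finset.card_inter_add_card_sdiff, SimpleGraph.card_neighborFinset_eq_degree]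
    have hdu : (d:ℝ) ≤ (G.degree u : ℝ) := by exact_mod_cast hdu1
    have hcr := congrArg (Nat.cast (R := ℝ)) hcards
    push_cast at hcr
    linarith
  -- Double counting: swap the order of summation.
  have swap : ∑ u ∈ Bbar, ((G.neighborFinset u ∩ Vhi).card : ℝ)
      = ∑ v ∈ Vhi, ((G.neighborFinset v ∩ Bbar).card : ℝ) := by
    have h1 : ∀ u : V, G.neighborFinset u ∩ Vhi = Vhi.filter (fun v => G.Adj u v) := by
      intro u; ext v
      simp [SimpleGraph.mem_neighborFinset, and_comm]
    have h2 : ∀ v : V, G.neighborFinset v ∩ Bbar = Bbar.filter (fun u => G.Adj v u) := by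
      intro v; ext u
      simp [SimpleGraph.mem_neighborFinset, and_comm]
    simp only [h1, h2, Finset.card_filter]
    push_cast
    rw [Finset.sum_comm]
    refine Finset.sum_congr rfl fun v _ => Finset.sum_congr rfl fun u _ => ?_
    simp only [show G.Adj u v ↔ G.Adj v u from G.adj_comm u v]
  -- Each vertex of V_{≥d'} has few neighbors in B̄_d.
  have bound : ∀ v ∈ Vhi,
      ((G.neighborFinset v ∩ Bbar).card : ℝ) ≤ c * Real.sqrt d * (Real.log d)^5 := by
    intro v _
    rcases (G.neighborFinset v ∩ Bbar).eq_empty_or_nonempty with he | ⟨u, hu⟩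
    · rw [he]
      simp only [Finset.card_empty, Nat.cast_zero]
      positivity
    · have hu' := Finset.mem_inter.1 hu
      have hadj : v ∈ G.neighborFinset u := by
        rw [SimpleGraph.mem_neighborFinset] at hu' ⊢
        exact (G.adj_comm _ _).1 hu'.1
      have h5 := ((hBbar u).1 hu'.2).2 v hadj
      have hBB : Bbar ⊆ Bd := fun x hx => ((hBbar x).1 hx).1
      have hsub : G.neighborFinset v ∩ Bbar ⊆ G.neighborFinset v ∩ Bd :=
        Finset.inter_subset_inter (subset_refl _) hBB
      calc ((G.neighborFinset v ∩ Bbar).card : ℝ)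
          ≤ ((G.neighborFinset v ∩ Bd).card : ℝ) := by
            exact_mod_cast Finset.card_le_card hsub
        _ ≤ _ := h5.le
  have main : (d:ℝ)/2 * Bbar.card ≤ c * Real.sqrt d * (Real.log d)^5 * Vhi.card := by
    calc (d:ℝ)/2 * Bbar.card = ∑ _u ∈ Bbar, (d:ℝ)/2 := by
          rw [Finset.sum_const, nsmul_eq_mul]; ring
      _ ≤ ∑ u ∈ Bbar, ((G.neighborFinset u ∩ Vhi).card : ℝ) := Finset.sum_le_sum key
      _ = ∑ v ∈ Vhi, ((G.neighborFinset v ∩ Bbar).card : ℝ) := swap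
      _ ≤ ∑ _v ∈ Vhi, (c * Real.sqrt d * (Real.log d)^5) := Finset.sum_le_sum bound
      _ = _ := by rw [Finset.sum_const, nsmul_eq_mul]; ring
  have hsq : Real.sqrt d * Real.sqrt d = (d:ℝ) := Real.mul_self_sqrt hdpos.le
  rw [le_div_iff₀ hsd]
  nlinarith [main, hsq, hsd, mul_pos hsd hsd]
end
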